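/- arXiv:2602.20858 — 2 statements merged into one kernel-verified Lean document; each statement's English description precedes it below -/
import Mathlib

section
/- Let X be a real normed space, Φ : X → ℝ locally Lipschitz, and Ψ : X → (−∞, ∞] convex, proper, lower semicontinuous. Suppose u ∈ X with Ψ(u) < ∞, w ∈ X*, and Φ°(u; v − u) + Ψ(v) − Ψ(u) ≥ ⟨w, v − u⟩ for all v ∈ X. Then w ∈ ∂Φ(u) + ∂Ψ(u), where ∂Φ is the Clarke generalized gradient and ∂Ψ is the convex subdifferential. -/
/-!
The Clarke derivative `f = Φ°(u; ·)` of a locally Lipschitz `Φ` is sublinear and bounded by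
`K ‖·‖`, and the hypothesis says that the concave function `h z = Ψ u + w z - Ψ (u + z)` lies
below `f` on the convex set `D` where `Ψ (u + ·)` is finite. The function
`p v = inf {f (v + t • z) - t * h z | t ≥ 0, z ∈ D}` is the largest sublinear minorant of `f`
with `p (-z) ≤ -h z` on `D`; by Hahn–Banach some linear `ξ` lies below `p`. Then `ξ ≤ f`, so `ξ`
is continuous and `ξ ∈ ∂Φ(u)`, while `h ≤ ξ` on `D` says that `w - ξ ∈ ∂Ψ(u)`.
-/

open Filter

/-- Clarke generalized directional derivative. -/
noncomputable def clarkeDeriv {X : Type*} [NormedAddCommGroup X] [NormedSpace ℝ X]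
    (Φ : X → ℝ) (u v : X) : ℝ :=
  limsup (fun p : X × ℝ => (Φ (p.1 + p.2 • v) - Φ p.1) / p.2)
    ((nhds u) ×ˢ (nhdsWithin 0 (Set.Ioi 0)))

open Topology Set Pointwise

structure IsSublinear {E : Type*} [AddCommGroup E] [Module ℝ E] (f : E → ℝ) : Prop where
  smul_of_pos : ∀ c : ℝ, 0 < c → ∀ x, f (c • x) = c * f x
  add_le : ∀ x y, f (x + y) ≤ f x + f y

namespace IsSublinear

variable {E : Type*} [AddCommGroup E] [Module ℝ E] {f : E → ℝ}

theorem map_zero (hf : IsSublinear f) : f 0 = 0 := by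
  have := hf.smul_of_pos 2 two_pos 0
  rw [smul_zero] at this
  linarith

theorem smul_of_nonneg (hf : IsSublinear f) {c : ℝ} (hc : 0 ≤ c) (x : E) : f (c • x) = c * f x := by
  rcases hc.eq_or_lt with rfl | hc
  · simp [hf.map_zero]
  · exact hf.smul_of_pos c hc x

end IsSublinear

theorem ConcaveOn.exists_smul_eq_add_smul {E : Type*} [AddCommGroup E] [Module ℝ E]
    {D : Set E} {h : E → ℝ} (hh : ConcaveOn ℝ D h) {t₁ t₂ : ℝ} (ht₁ : 0 ≤ t₁) (ht₂ : 0 ≤ t₂)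
    {z₁ z₂ : E} (hz₁ : z₁ ∈ D) (hz₂ : z₂ ∈ D) :
    ∃ t, 0 ≤ t ∧ ∃ z ∈ D, t • z = t₁ • z₁ + t₂ • z₂ ∧ t₁ * h z₁ + t₂ * h z₂ ≤ t * h z := by
  rcases (add_nonneg ht₁ ht₂).eq_or_lt with ht | ht
  · obtain ⟨rfl, rfl⟩ : t₁ = 0 ∧ t₂ = 0 := ⟨by linarith, by linarith⟩
    exact ⟨0, le_rfl, z₁, hz₁, by simp, by simp⟩
  refine ⟨t₁ + t₂, ht.le, (t₁ / (t₁ + t₂)) • z₁ + (t₂ / (t₁ + t₂)) • z₂,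
    hh.1 hz₁ hz₂ (by positivity) (by positivity) (by field_simp), ?_, ?_⟩
  · simp only [smul_add, smul_smul, mul_div_cancel₀ _ ht.ne']
  · have := hh.2 hz₁ hz₂ (div_nonneg ht₁ ht.le) (div_nonneg ht₂ ht.le)
      (by field_simp : t₁ / (t₁ + t₂) + t₂ / (t₁ + t₂) = 1)
    simp only [smul_eq_mul] at this
    calc t₁ * h z₁ + t₂ * h z₂
        = (t₁ + t₂) * (t₁ / (t₁ + t₂) * h z₁ + t₂ / (t₁ + t₂) * h z₂) := by field_simp
      _ ≤ _ := mul_le_mul_of_nonneg_left this ht.le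

section Sandwich

variable {E : Type*} [AddCommGroup E] [Module ℝ E] {f h : E → ℝ} {D : Set E}

def sandwichValues (f h : E → ℝ) (D : Set E) (v : E) : Set ℝ :=
  {y | ∃ t, 0 ≤ t ∧ ∃ z ∈ D, y = f (v + t • z) - t * h z}

noncomputable def sandwich (f h : E → ℝ) (D : Set E) (v : E) : ℝ := sInf (sandwichValues f h D v)

theorem apply_mem_sandwichValues (hD : D.Nonempty) (v : E) : f v ∈ sandwichValues f h D v :=
  ⟨0, le_rfl, hD.some, hD.some_mem, by simp⟩

theorem bddBelow_sandwichValues (hf : IsSublinear f) (hhf : ∀ z ∈ D, h z ≤ f z) (v : E) :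
    BddBelow (sandwichValues f h D v) := by
  refine ⟨-f (-v), ?_⟩
  rintro _ ⟨t, ht, z, hz, rfl⟩
  have hscale : t * h z ≤ f (t • z) := by
    rw [hf.smul_of_nonneg ht]; exact mul_le_mul_of_nonneg_left (hhf z hz) ht
  have := hf.add_le (v + t • z) (-v)
  rw [add_neg_cancel_comm] at this
  linarith

theorem sandwichValues_smul (hf : IsSublinear f) {c : ℝ} (hc : 0 < c) (v : E) :
    sandwichValues f h D (c • v) = c • sandwichValues f h D v := by
  ext y
  rw [Set.mem_smul_set]
  constructor
  · rintro ⟨t, ht, z, hz, rfl⟩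
    refine ⟨f (v + (t / c) • z) - t / c * h z, ⟨t / c, by positivity, z, hz, rfl⟩, ?_⟩
    rw [smul_eq_mul, mul_sub, ← hf.smul_of_pos c hc, smul_add, smul_smul]
    field_simp
  · rintro ⟨_, ⟨t, ht, z, hz, rfl⟩, rfl⟩
    refine ⟨c * t, by positivity, z, hz, ?_⟩
    rw [smul_eq_mul, mul_sub, ← hf.smul_of_pos c hc, smul_add, smul_smul, mul_assoc]

theorem sandwich_le (hf : IsSublinear f) (hD : D.Nonempty) (hhf : ∀ z ∈ D, h z ≤ f z) (v : E) :
    sandwich f h D v ≤ f v :=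
  csInf_le (bddBelow_sandwichValues hf hhf v) (apply_mem_sandwichValues hD v)

theorem sandwich_neg_le (hf : IsSublinear f) (hhf : ∀ z ∈ D, h z ≤ f z) {z : E} (hz : z ∈ D) :
    sandwich f h D (-z) ≤ -h z := by
  have hmem : f (-z + (1 : ℝ) • z) - 1 * h z ∈ sandwichValues f h D (-z) :=
    ⟨1, zero_le_one, z, hz, rfl⟩
  have := csInf_le (bddBelow_sandwichValues hf hhf _) hmem
  rwa [one_smul, neg_add_cancel, hf.map_zero, one_mul, zero_sub] at this

theorem isSublinear_sandwich (hf : IsSublinear f) (hD : D.Nonempty) (hh : ConcaveOn ℝ D h)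
    (hhf : ∀ z ∈ D, h z ≤ f z) : IsSublinear (sandwich f h D) where
  smul_of_pos c hc v := by
    rw [sandwich, sandwichValues_smul hf hc, Real.sInf_smul_of_nonneg hc.le, smul_eq_mul, sandwich]
  add_le v₁ v₂ := by
    have hne (v : E) : (sandwichValues f h D v).Nonempty := ⟨_, apply_mem_sandwichValues hD v⟩
    have hbdd := bddBelow_sandwichValues hf hhf
    rw [sandwich, sandwich, sandwich, ← csInf_add (hne v₁) (hbdd v₁) (hne v₂) (hbdd v₂)]
    refine le_csInf ((hne v₁).add (hne v₂)) ?_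
    rintro _ ⟨_, ⟨t₁, ht₁, z₁, hz₁, rfl⟩, _, ⟨t₂, ht₂, z₂, hz₂, rfl⟩, rfl⟩
    obtain ⟨t, ht, z, hz, hsum, hle⟩ := hh.exists_smul_eq_add_smul ht₁ ht₂ hz₁ hz₂
    have hmem : f (v₁ + v₂ + t • z) - t * h z ∈ sandwichValues f h D (v₁ + v₂) :=
      ⟨t, ht, z, hz, rfl⟩
    have := hf.add_le (v₁ + t₁ • z₁) (v₂ + t₂ • z₂)
    rw [add_add_add_comm, ← hsum] at this
    linarith [csInf_le (hbdd _) hmem]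

theorem IsSublinear.exists_linearMap_le_of_le_concaveOn (hf : IsSublinear f) (hD : D.Nonempty)
    (hh : ConcaveOn ℝ D h) (hhf : ∀ z ∈ D, h z ≤ f z) :
    ∃ g : E →ₗ[ℝ] ℝ, (∀ x, g x ≤ f x) ∧ ∀ z ∈ D, h z ≤ g z := by
  have hp := isSublinear_sandwich hf hD hh hhf
  obtain ⟨g, -, hg⟩ := exists_extension_of_le_sublinear ⟨⊥, 0⟩ _ hp.smul_of_pos hp.add_le
    fun x => by simp [(Submodule.mem_bot ℝ).1 x.2, hp.map_zero]
  refine ⟨g, fun x => (hg x).trans (sandwich_le hf hD hhf x), fun z hz => ?_⟩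
  have := (hg (-z)).trans (sandwich_neg_le hf hhf hz)
  rw [map_neg] at this
  linarith

end Sandwich

section AbsBounded
variable {α : Type*} {F : Filter α} {g : α → ℝ} {C : ℝ}

theorem Filter.Eventually.isBoundedUnder_le_of_abs_le (h : ∀ᶠ x in F, |g x| ≤ C) :
    IsBoundedUnder (· ≤ ·) F g :=
  isBoundedUnder_of_eventually_le (h.mono fun _ hx => (abs_le.1 hx).2)

theorem Filter.Eventually.isBoundedUnder_ge_of_abs_le (h : ∀ᶠ x in F, |g x| ≤ C) :
    IsBoundedUnder (· ≥ ·) F g :=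
  isBoundedUnder_of_eventually_ge (h.mono fun _ hx => (abs_le.1 hx).1)

end AbsBounded

theorem Filter.map_prod_mul_left_nhdsGT {X : Type*} (F : Filter X) {c : ℝ} (hc : 0 < c) :
    map (fun p : X × ℝ => (p.1, c * p.2)) (F ×ˢ 𝓝[>] (0 : ℝ)) = F ×ˢ 𝓝[>] 0 := by
  have : map (c * ·) (𝓝[>] (0 : ℝ)) = 𝓝[>] 0 := by
    change map (Homeomorph.mulLeft₀ c hc.ne') _ = _
    rw [(Homeomorph.mulLeft₀ c hc.ne').isEmbedding.map_nhdsWithin_eq]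
    simp [image_mul_left_Ioi hc]
  rw [show (fun p : X × ℝ => (p.1, c * p.2)) = Prod.map id (c * ·) from rfl, ← prod_map_map_eq',
    map_id, this]

section Clarke

variable {X : Type*} [NormedAddCommGroup X] [NormedSpace ℝ X] {Φ : X → ℝ} {u : X} {K : NNReal}
  {s : Set X}

noncomputable def diffQuotient (Φ : X → ℝ) (v : X) (p : X × ℝ) : ℝ :=
  (Φ (p.1 + p.2 • v) - Φ p.1) / p.2

theorem clarkeDeriv_eq_limsup (Φ : X → ℝ) (u v : X) :
    clarkeDeriv Φ u v = limsup (diffQuotient Φ v) (𝓝 u ×ˢ 𝓝[>] (0 : ℝ)) := rfl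

theorem tendsto_add_smul_nhds_nhdsGT (u v : X) :
    Tendsto (fun p : X × ℝ => (p.1 + p.2 • v, p.2)) (𝓝 u ×ˢ 𝓝[>] (0 : ℝ))
      (𝓝 u ×ˢ 𝓝[>] (0 : ℝ)) := by
  have hsnd : Tendsto (fun p : X × ℝ => p.2) (𝓝 u ×ˢ 𝓝[>] (0 : ℝ)) (𝓝 0) :=
    tendsto_snd.mono_right nhdsWithin_le_nhds
  refine Tendsto.prodMk ?_ tendsto_snd
  simpa using tendsto_fst.add (hsnd.smul_const v)

theorem LipschitzOnWith.eventually_abs_diffQuotient_le (hΦ : LipschitzOnWith K Φ s)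
    (hs : s ∈ 𝓝 u) (v : X) :
    ∀ᶠ p in 𝓝 u ×ˢ 𝓝[>] (0 : ℝ), |diffQuotient Φ v p| ≤ K * ‖v‖ := by
  filter_upwards [tendsto_fst.eventually hs,
    (tendsto_fst.comp (tendsto_add_smul_nhds_nhdsGT u v)).eventually hs,
    tendsto_snd.eventually self_mem_nhdsWithin] with p hp hpv (hpos : 0 < p.2)
  rw [diffQuotient, abs_div, abs_of_pos hpos, div_le_iff₀ hpos]
  calc |Φ (p.1 + p.2 • v) - Φ p.1| ≤ K * ‖p.1 + p.2 • v - p.1‖ := by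
        simpa only [Function.comp_apply, Real.norm_eq_abs, dist_eq_norm] using
          hΦ.dist_le_mul _ hpv _ hp
    _ = K * ‖v‖ * p.2 := by
        rw [add_sub_cancel_left, norm_smul, Real.norm_of_nonneg hpos.le]; ring

theorem LipschitzOnWith.clarkeDeriv_le (hΦ : LipschitzOnWith K Φ s) (hs : s ∈ 𝓝 u) (v : X) :
    clarkeDeriv Φ u v ≤ K * ‖v‖ := by
  have h := hΦ.eventually_abs_diffQuotient_le hs v
  exact limsup_le_of_le h.isBoundedUnder_ge_of_abs_le.isCoboundedUnder_le
    (h.mono fun _ hp => (abs_le.1 hp).2)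

theorem LipschitzOnWith.clarkeDeriv_add_le (hΦ : LipschitzOnWith K Φ s) (hs : s ∈ 𝓝 u)
    (v₁ v₂ : X) : clarkeDeriv Φ u (v₁ + v₂) ≤ clarkeDeriv Φ u v₁ + clarkeDeriv Φ u v₂ := by
  set π : X × ℝ → X × ℝ := fun p => (p.1 + p.2 • v₁, p.2)
  have hπ := tendsto_add_smul_nhds_nhdsGT u v₁
  have h₁ := hΦ.eventually_abs_diffQuotient_le hs v₁
  have h₂ := hΦ.eventually_abs_diffQuotient_le hs v₂
  have h₂π := hπ.eventually h₂
  have hsplit : diffQuotient Φ (v₁ + v₂) = diffQuotient Φ v₁ + diffQuotient Φ v₂ ∘ π := by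
    ext p
    simp only [diffQuotient, Pi.add_apply, Function.comp_apply, π, smul_add, ← add_div, add_assoc]
    ring_nf
  rw [clarkeDeriv_eq_limsup, hsplit]
  refine (limsup_add_le h₁.isBoundedUnder_ge_of_abs_le h₁.isBoundedUnder_le_of_abs_le
    h₂π.isBoundedUnder_ge_of_abs_le.isCoboundedUnder_le h₂π.isBoundedUnder_le_of_abs_le).trans
    (add_le_add le_rfl ?_)
  change limsup (diffQuotient Φ v₂ ∘ π) _ ≤ _
  rw [limsup_comp]
  exact limsup_le_limsup_of_le hπ
    (h₂.filter_mono hπ).isBoundedUnder_ge_of_abs_le.isCoboundedUnder_le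
    h₂.isBoundedUnder_le_of_abs_le

theorem LipschitzOnWith.clarkeDeriv_smul (hΦ : LipschitzOnWith K Φ s) (hs : s ∈ 𝓝 u)
    {c : ℝ} (hc : 0 < c) (v : X) : clarkeDeriv Φ u (c • v) = c * clarkeDeriv Φ u v := by
  have hscale : diffQuotient Φ (c • v) = (fun y => c * y) ∘ diffQuotient Φ v ∘
      fun p : X × ℝ => (p.1, c * p.2) := by
    ext p
    simp only [diffQuotient, Function.comp_apply, smul_smul]
    field_simp
  have h := hΦ.eventually_abs_diffQuotient_le hs v
  have hc' : ∀ᶠ p in 𝓝 u ×ˢ 𝓝[>] (0 : ℝ), |c * diffQuotient Φ v p| ≤ c * (K * ‖v‖) :=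
    h.mono fun p hp => by rw [abs_mul, abs_of_pos hc]; exact mul_le_mul_of_nonneg_left hp hc.le
  rw [clarkeDeriv_eq_limsup, clarkeDeriv_eq_limsup, hscale, ← Function.comp_assoc, limsup_comp,
    map_prod_mul_left_nhdsGT _ hc]
  exact ((OrderIso.mulLeft₀ c hc).limsup_apply h.isBoundedUnder_le_of_abs_le
    h.isBoundedUnder_ge_of_abs_le.isCoboundedUnder_le hc'.isBoundedUnder_le_of_abs_le
    hc'.isBoundedUnder_ge_of_abs_le.isCoboundedUnder_le).symm

theorem LipschitzOnWith.isSublinear_clarkeDeriv (hΦ : LipschitzOnWith K Φ s) (hs : s ∈ 𝓝 u) :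
    IsSublinear (clarkeDeriv Φ u) :=
  ⟨fun _ hc v => hΦ.clarkeDeriv_smul hs hc v, hΦ.clarkeDeriv_add_le hs⟩

end Clarke

theorem convexOn_toReal_of_ne_bot {X : Type*} [AddCommGroup X] [Module ℝ X] {Ψ : X → EReal}
    (hconv : ∀ x y : X, ∀ t : ℝ, 0 ≤ t → t ≤ 1 →
      Ψ (t • x + (1 - t) • y) ≤ (t : EReal) * Ψ x + ((1 - t : ℝ) : EReal) * Ψ y)
    (hnobot : ∀ x, Ψ x ≠ ⊥) : ConvexOn ℝ {x | Ψ x ≠ ⊤} (fun x => (Ψ x).toReal) := by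
  suffices key : ∀ x, Ψ x ≠ ⊤ → ∀ y, Ψ y ≠ ⊤ → ∀ a b : ℝ, 0 ≤ a → 0 ≤ b → a + b = 1 →
      Ψ (a • x + b • y) ≤ ((a * (Ψ x).toReal + b * (Ψ y).toReal : ℝ) : EReal) from
    ⟨fun x hx y hy a b ha hb hab => ne_top_of_le_ne_top (EReal.coe_ne_top _)
        (key x hx y hy a b ha hb hab),
      fun x hx y hy a b ha hb hab =>
        (EReal.toReal_le_toReal (key x hx y hy a b ha hb hab) (hnobot _)
          (EReal.coe_ne_top _)).trans_eq (EReal.toReal_coe _)⟩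
  intro x hx y hy a b ha hb hab
  obtain rfl : b = 1 - a := by linarith
  have := hconv x y a ha (by linarith)
  rwa [← EReal.coe_toReal hx (hnobot x), ← EReal.coe_toReal hy (hnobot y)] at this ⊢

theorem LinearMap.norm_apply_le_of_apply_le {E : Type*} [SeminormedAddCommGroup E] [NormedSpace ℝ E]
    (g : E →ₗ[ℝ] ℝ) {C : ℝ} (hg : ∀ x, g x ≤ C * ‖x‖) (x : E) : ‖g x‖ ≤ C * ‖x‖ := by
  have := hg (-x)
  rw [map_neg, norm_neg] at this
  exact abs_le.2 ⟨by linarith, hg x⟩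

theorem ps_characterization_general {X : Type*} [NormedAddCommGroup X] [NormedSpace ℝ X]
    (Φ : X → ℝ) (hΦ : LocallyLipschitz Φ)
    (Ψ : X → EReal)
    (hconv : ∀ x y : X, ∀ t : ℝ, 0 ≤ t → t ≤ 1 →
      Ψ (t • x + (1 - t) • y) ≤ (t : EReal) * Ψ x + ((1 - t : ℝ) : EReal) * Ψ y)
    (hnobot : ∀ x, Ψ x ≠ ⊥)
    (u : X) (hu : Ψ u ≠ ⊤)
    (w : X →L[ℝ] ℝ)
    (hw : ∀ v : X, Ψ u + ((w (v - u) : ℝ) : EReal)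
        ≤ ((clarkeDeriv Φ u (v - u) : ℝ) : EReal) + Ψ v) :
    ∃ ξ η : X →L[ℝ] ℝ,
      (∀ v : X, ξ v ≤ clarkeDeriv Φ u v) ∧
      (∀ v : X, Ψ u + ((η (v - u) : ℝ) : EReal) ≤ Ψ v) ∧
      w = ξ + η := by
  obtain ⟨K, s, hs, hK⟩ := hΦ u
  have hψ := (convexOn_toReal_of_ne_bot hconv hnobot).translate_right u
  set D := (u + ·) ⁻¹' {x | Ψ x ≠ ⊤}
  have hD : (0 : X) ∈ D := by simpa [D] using hu
  set h : X → ℝ := fun z => (Ψ u).toReal + w z - (Ψ (u + z)).toReal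
  have hh : ConcaveOn ℝ D h :=
    ((concaveOn_const _ hψ.1).add (w.toLinearMap.concaveOn hψ.1)).sub hψ
  have hhf (z : X) (hz : z ∈ D) : h z ≤ clarkeDeriv Φ u z := by
    have := hw (u + z)
    rw [add_sub_cancel_left, ← EReal.coe_toReal hu (hnobot u),
      ← EReal.coe_toReal hz (hnobot _)] at this
    norm_cast at this
    simp only [h]
    linarith
  obtain ⟨g, hgf, hhg⟩ := (hK.isSublinear_clarkeDeriv hs).exists_linearMap_le_of_le_concaveOn
    ⟨0, hD⟩ hh hhf
  let ξ := g.mkContinuous K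
    (g.norm_apply_le_of_apply_le fun x => (hgf x).trans (hK.clarkeDeriv_le hs x))
  refine ⟨ξ, w - ξ, hgf, fun v => ?_, by ext; simp⟩
  by_cases hv : Ψ v = ⊤
  · simp [hv]
  have := hhg (v - u) (by simpa [D] using hv)
  simp only [h, add_sub_cancel] at this
  rw [← EReal.coe_toReal hu (hnobot u), ← EReal.coe_toReal hv (hnobot _)]
  norm_cast
  simp only [sub_apply, ξ, LinearMap.mkContinuous_apply]
  linarith

/-- if `Φ` is locally Lipschitz, `Ψ : X → (−∞,∞]` is convex, proper and
lower semicontinuous, `Ψ(u) < ∞` and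
`Φ°(u; v−u) + Ψ(v) − Ψ(u) ≥ ⟨w, v−u⟩` for all `v`, then `w ∈ ∂Φ(u) + ∂Ψ(u)`. -/
theorem ps_characterization {X : Type*} [NormedAddCommGroup X] [NormedSpace ℝ X]
    (Φ : X → ℝ) (hΦ : LocallyLipschitz Φ)
    (Ψ : X → EReal)
    (hconv : ∀ x y : X, ∀ t : ℝ, 0 ≤ t → t ≤ 1 →
      Ψ (t • x + (1 - t) • y) ≤ (t : EReal) * Ψ x + ((1 - t : ℝ) : EReal) * Ψ y)
    (hproper : ∃ x, Ψ x ≠ ⊤) (hnobot : ∀ x, Ψ x ≠ ⊥)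
    (hlsc : LowerSemicontinuous Ψ)
    (u : X) (hu : Ψ u ≠ ⊤)
    (w : X →L[ℝ] ℝ)
    (hw : ∀ v : X, Ψ u + ((w (v - u) : ℝ) : EReal)
        ≤ ((clarkeDeriv Φ u (v - u) : ℝ) : EReal) + Ψ v) :
    ∃ ξ η : X →L[ℝ] ℝ,
      (∀ v : X, ξ v ≤ clarkeDeriv Φ u v) ∧
      (∀ v : X, Ψ u + ((η (v - u) : ℝ) : EReal) ≤ Ψ v) ∧
      w = ξ + η :=
  ps_characterization_general Φ hΦ Ψ hconv hnobot u hu w hw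
end

section
/- Let X be a normed space, Y ⊆ X a dense subspace, F̃ : X → ℝ locally Lipschitz, and F = F̃|_Y its restriction (with Y given the norm of X). Then for every u ∈ Y, the generalized directional derivative computed in Y is bounded above by the one computed in X: F°(u; v) ≤ F̃°(u; v) for all v ∈ Y, and consequently ∂F(u) ⊆ {φ|_Y : φ ∈ ∂F̃(u)}. -/
open Filter

section Aux

variable {X : Type*} [NormedAddCommGroup X] [NormedSpace ℝ X]
  {F : X → ℝ} {u : X} {K : NNReal} {ε : ℝ}

lemma clarke_aux_bound (hK : LipschitzOnWith K F (Metric.ball u ε)) (hε : 0 < ε) (v : X) :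
    ∀ᶠ p : X × ℝ in (nhds u) ×ˢ (nhdsWithin 0 (Set.Ioi 0)),
      |(F (p.1 + p.2 • v) - F p.1) / p.2| ≤ K * ‖v‖ := by
  have h1 : ∀ᶠ w in nhds u, w ∈ Metric.ball u (ε/2) :=
    Metric.ball_mem_nhds u (by linarith)
  have h2 : ∀ᶠ t in nhdsWithin (0:ℝ) (Set.Ioi 0),
      t ∈ Set.Ioo (0:ℝ) (ε / (2 * (‖v‖ + 1))) := by
    refine Ioo_mem_nhdsGT_of_mem ⟨le_refl 0, ?_⟩
    positivity
  filter_upwards [h1.prod_mk h2] with p hp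
  obtain ⟨hw, ht0, htb⟩ := hp
  have hvpos : (0:ℝ) < ‖v‖ + 1 := by positivity
  have hmem1 : p.1 ∈ Metric.ball u ε :=
    Metric.ball_subset_ball (by linarith) hw
  have hmem2 : p.1 + p.2 • v ∈ Metric.ball u ε := by
    have hnn : ‖p.1 + p.2 • v - u‖ ≤ ‖p.1 - u‖ + p.2 * ‖v‖ := by
      have he : p.1 + p.2 • v - u = (p.1 - u) + p.2 • v := by abel
      rw [he]
      refine (norm_add_le _ _).trans ?_
      rw [norm_smul, Real.norm_eq_abs, abs_of_pos ht0]
    have hb : p.2 * ‖v‖ < ε / 2 := by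
      have := (lt_div_iff₀ (by positivity : (0:ℝ) < 2 * (‖v‖ + 1))).mp htb
      nlinarith [norm_nonneg v]
    have hw' : ‖p.1 - u‖ < ε / 2 := by
      rw [Metric.mem_ball, dist_eq_norm] at hw; exact hw
    rw [Metric.mem_ball, dist_eq_norm]
    linarith
  have hd : |F (p.1 + p.2 • v) - F p.1| ≤ K * (p.2 * ‖v‖) := by
    have h := hK.dist_le_mul _ hmem2 _ hmem1
    rw [Real.dist_eq, dist_eq_norm] at h
    have he : p.1 + p.2 • v - p.1 = p.2 • v := by abel
    rw [he, norm_smul, Real.norm_eq_abs, abs_of_pos ht0] at h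
    linarith [h]
  rw [abs_div, abs_of_pos ht0, div_le_iff₀ ht0]
  calc |F (p.1 + p.2 • v) - F p.1| ≤ K * (p.2 * ‖v‖) := hd
    _ = K * ‖v‖ * p.2 := by ring

lemma clarke_aux_bddAbove (hK : LipschitzOnWith K F (Metric.ball u ε)) (hε : 0 < ε) (v : X) :
    IsBoundedUnder (· ≤ ·) ((nhds u) ×ˢ (nhdsWithin (0:ℝ) (Set.Ioi 0)))
      (fun p : X × ℝ => (F (p.1 + p.2 • v) - F p.1) / p.2) :=
  isBoundedUnder_of_eventually_le (a := (K : ℝ) * ‖v‖) <| by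
    filter_upwards [clarke_aux_bound hK hε v] with p hp using (le_abs_self _).trans hp

lemma clarke_aux_bddBelow (hK : LipschitzOnWith K F (Metric.ball u ε)) (hε : 0 < ε) (v : X) :
    IsBoundedUnder (· ≥ ·) ((nhds u) ×ˢ (nhdsWithin (0:ℝ) (Set.Ioi 0)))
      (fun p : X × ℝ => (F (p.1 + p.2 • v) - F p.1) / p.2) :=
  isBoundedUnder_of_eventually_ge (a := -((K : ℝ) * ‖v‖)) <| by
    filter_upwards [clarke_aux_bound hK hε v] with p hp using neg_le_of_abs_le hp

lemma clarke_aux_lip (hK : LipschitzOnWith K F (Metric.ball u ε)) (hε : 0 < ε) (v y : X) :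
    clarkeDeriv F u y ≤ clarkeDeriv F u v + K * ‖y - v‖ := by
  haveI hne : ((nhds u) ×ˢ (nhdsWithin (0:ℝ) (Set.Ioi 0))).NeBot :=
    Filter.prod_neBot.mpr ⟨inferInstance, nhdsGT_neBot 0⟩
  have h1 : ∀ᶠ w in nhds u, w ∈ Metric.ball u (ε/2) :=
    Metric.ball_mem_nhds u (by linarith)
  have h2 : ∀ᶠ t in nhdsWithin (0:ℝ) (Set.Ioi 0),
      t ∈ Set.Ioo (0:ℝ) (ε / (2 * (‖v‖ + ‖y‖ + 1))) := by
    refine Ioo_mem_nhdsGT_of_mem ⟨le_refl 0, ?_⟩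
    positivity
  have hpt : ∀ᶠ p : X × ℝ in (nhds u) ×ˢ (nhdsWithin (0:ℝ) (Set.Ioi 0)),
      (F (p.1 + p.2 • y) - F p.1) / p.2
        ≤ (F (p.1 + p.2 • v) - F p.1) / p.2 + K * ‖y - v‖ := by
    filter_upwards [h1.prod_mk h2] with p hp
    obtain ⟨hw, ht0, htb⟩ := hp
    have hwpos : (0:ℝ) < ‖v‖ + ‖y‖ + 1 := by positivity
    have hw' : ‖p.1 - u‖ < ε / 2 := by
      rw [Metric.mem_ball, dist_eq_norm] at hw; exact hw
    have hmem : ∀ z : X, ‖z‖ ≤ ‖v‖ + ‖y‖ → p.1 + p.2 • z ∈ Metric.ball u ε := by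
      intro z hz
      have hnn : ‖p.1 + p.2 • z - u‖ ≤ ‖p.1 - u‖ + p.2 * ‖z‖ := by
        have he : p.1 + p.2 • z - u = (p.1 - u) + p.2 • z := by abel
        rw [he]
        refine (norm_add_le _ _).trans ?_
        rw [norm_smul, Real.norm_eq_abs, abs_of_pos ht0]
      have hb : p.2 * ‖z‖ < ε / 2 := by
        have := (lt_div_iff₀ (by positivity : (0:ℝ) < 2 * (‖v‖ + ‖y‖ + 1))).mp htb
        nlinarith [norm_nonneg z]
      rw [Metric.mem_ball, dist_eq_norm]
      linarith
    have hmv : p.1 + p.2 • v ∈ Metric.ball u ε :=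
      hmem v (by linarith [norm_nonneg y])
    have hmy : p.1 + p.2 • y ∈ Metric.ball u ε :=
      hmem y (by linarith [norm_nonneg v])
    have hd : |F (p.1 + p.2 • y) - F (p.1 + p.2 • v)| ≤ K * (p.2 * ‖y - v‖) := by
      have h := hK.dist_le_mul _ hmy _ hmv
      rw [Real.dist_eq, dist_eq_norm] at h
      have he : p.1 + p.2 • y - (p.1 + p.2 • v) = p.2 • (y - v) := by
        rw [smul_sub]; abel
      rw [he, norm_smul, Real.norm_eq_abs, abs_of_pos ht0] at h
      linarith [h]
    have key : (F (p.1 + p.2 • y) - F p.1) - (F (p.1 + p.2 • v) - F p.1)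
        ≤ K * ‖y - v‖ * p.2 := by
      have h := (abs_le.mp hd).2
      nlinarith
    rw [div_add' _ _ _ (ne_of_gt ht0), div_le_div_iff₀ ht0 ht0]
    nlinarith
  calc clarkeDeriv F u y
      ≤ limsup (fun p : X × ℝ => (F (p.1 + p.2 • v) - F p.1) / p.2 + K * ‖y - v‖)
          ((nhds u) ×ˢ (nhdsWithin (0:ℝ) (Set.Ioi 0))) := by
        refine limsup_le_limsup hpt ?_ ?_
        · exact (clarke_aux_bddBelow hK hε y).isCoboundedUnder_le
        · exact isBoundedUnder_of_eventually_le (a := (K : ℝ) * ‖v‖ + K * ‖y - v‖) <| by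
            filter_upwards [clarke_aux_bound hK hε v] with p hp using
              add_le_add ((le_abs_self _).trans hp) le_rfl
    _ = clarkeDeriv F u v + K * ‖y - v‖ :=
        limsup_add_const _ _ _ (clarke_aux_bddAbove hK hε v)
          ((clarke_aux_bddBelow hK hε v).isCoboundedUnder_le)

end Aux

/-- let `Y` be a dense subspace of `X` (with the induced norm),
`F̃ : X → ℝ` locally Lipschitz and `F = F̃|_Y`. Then for `u, v ∈ Y` the generalized
directional derivative computed in `Y` is at most the one computed in `X`, and every
element of `∂F(u)` (in `Y*`) is the restriction of an element of `∂F̃(u)` (in `X*`). -/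
theorem clarke_restriction_dense {X : Type*} [NormedAddCommGroup X] [NormedSpace ℝ X]
    (Y : Subspace ℝ X) (hdense : Dense (Y : Set X))
    (Ftilde : X → ℝ) (hF : LocallyLipschitz Ftilde) (u : Y) :
    (∀ v : Y, clarkeDeriv (fun y : Y => Ftilde y) u v
        ≤ clarkeDeriv Ftilde (u : X) (v : X)) ∧
    (∀ ψ : Y →L[ℝ] ℝ, (∀ v : Y, ψ v ≤ clarkeDeriv (fun y : Y => Ftilde y) u v) →
      ∃ φ : X →L[ℝ] ℝ, (∀ v : X, φ v ≤ clarkeDeriv Ftilde (u : X) v) ∧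
        ∀ v : Y, φ v = ψ v) := by
  obtain ⟨K, s, hs, hKs⟩ := hF (u : X)
  obtain ⟨ε, hε, hball⟩ := Metric.mem_nhds_iff.mp hs
  have hK : LipschitzOnWith K Ftilde (Metric.ball (u : X) ε) := hKs.mono hball
  have part1 : ∀ v : Y, clarkeDeriv (fun y : Y => Ftilde y) u v
      ≤ clarkeDeriv Ftilde (u : X) (v : X) := by
    intro v
    set g : Y × ℝ → X × ℝ := fun p => ((p.1 : X), p.2) with hg
    set f : X × ℝ → ℝ := fun p => (Ftilde (p.1 + p.2 • (v : X)) - Ftilde p.1) / p.2 with hf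
    have hcomp : (fun p : Y × ℝ =>
        (Ftilde ↑(p.1 + p.2 • v) - Ftilde ↑p.1) / p.2) = f ∘ g := by
      funext p
      simp [hf, hg]
    have htend : Filter.map g ((nhds u) ×ˢ (nhdsWithin (0:ℝ) (Set.Ioi 0)))
        ≤ ((nhds (u : X)) ×ˢ (nhdsWithin (0:ℝ) (Set.Ioi 0))) :=
      Tendsto.prodMap (continuous_subtype_val.tendsto u) tendsto_id
    haveI : ((nhds u) ×ˢ (nhdsWithin (0:ℝ) (Set.Ioi 0))).NeBot :=
      Filter.prod_neBot.mpr ⟨inferInstance, nhdsGT_neBot 0⟩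
    haveI hmapne : (Filter.map g ((nhds u) ×ˢ (nhdsWithin (0:ℝ) (Set.Ioi 0)))).NeBot :=
      Filter.map_neBot
    calc clarkeDeriv (fun y : Y => Ftilde y) u v
        = limsup f (Filter.map g ((nhds u) ×ˢ (nhdsWithin (0:ℝ) (Set.Ioi 0)))) := by
          rw [clarkeDeriv, hcomp, limsup_comp]
      _ ≤ clarkeDeriv Ftilde (u : X) (v : X) := by
          refine limsup_le_limsup_of_le htend ?_ ?_
          · refine IsBoundedUnder.isCoboundedUnder_le ?_
            obtain ⟨b, hb⟩ := clarke_aux_bddBelow hK hε (v : X)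
            exact ⟨b, htend (by exact hb)⟩
          · exact clarke_aux_bddAbove hK hε (v : X)
  refine ⟨part1, ?_⟩
  intro ψ hψ
  have h_e : IsUniformInducing (Y.subtypeL : Y →L[ℝ] X) :=
    isUniformEmbedding_subtype_val.isUniformInducing
  have h_dense : DenseRange (Y.subtypeL : Y →L[ℝ] X) := by
    have hr : Set.range (Y.subtypeL : Y →L[ℝ] X) = (Y : Set X) := Subtype.range_val
    rw [DenseRange, hr]; exact hdense
  set φ := ψ.extend (Y.subtypeL : Y →L[ℝ] X) with hφ
  have hext : ∀ v : Y, φ v = ψ v := fun v =>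
    ContinuousLinearMap.extend_eq ψ h_dense h_e v
  refine ⟨φ, ?_, hext⟩
  have hDlip : LipschitzWith K (fun v : X => clarkeDeriv Ftilde (u : X) v) := by
    refine LipschitzWith.of_dist_le_mul fun y v => ?_
    rw [Real.dist_eq, abs_le]
    constructor
    · have h := clarke_aux_lip hK hε y v
      rw [dist_eq_norm, ← norm_neg, neg_sub]
      linarith
    · have h := clarke_aux_lip hK hε v y
      rw [dist_eq_norm]
      linarith
  have hclosed : IsClosed {v : X | φ v ≤ clarkeDeriv Ftilde (u : X) v} :=
    isClosed_le φ.continuous hDlip.continuous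
  intro v
  have hsub : (Y : Set X) ⊆ {v : X | φ v ≤ clarkeDeriv Ftilde (u : X) v} := by
    intro x hx
    have hex : φ x = ψ ⟨x, hx⟩ := hext ⟨x, hx⟩
    simp only [Set.mem_setOf_eq, hex]
    exact (hψ ⟨x, hx⟩).trans (part1 ⟨x, hx⟩)
  have hcl : closure (Y : Set X) ⊆ {v : X | φ v ≤ clarkeDeriv Ftilde (u : X) v} :=
    hclosed.closure_subset_iff.mpr hsub
  exact hcl (hdense v)
end
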